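/- Suppose Λ_n < ∞. Then for every β > Λ_n, the normalised partition function satisfies the two-sided bound 1 ≤ Z_n(β) ≤ β/(β − Λ_n). -/

import Mathlib

open Filter MeasureTheory
open scoped ENNReal

/-- Maximum score `z_n^*`. -/
noncomputable def zmax (n : ℕ) (z : Fin n → ℝ) : ℝ := sSup (Set.range z)

/-- Gap `g_{n,j} = z_n^* - z_{n,j}`. -/
noncomputable def gap (n : ℕ) (z : Fin n → ℝ) (j : Fin n) : ℝ := zmax n z - z j

/-- Cumulative gap-counting function `N_n(t)`. -/
noncomputable def Ncount (n : ℕ) (z : Fin n → ℝ) (t : ℝ) : ℕ :=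
  {j : Fin n | gap n z j ≤ t}.ncard

/-- Normalised partition function `Z_n(β)`. -/
noncomputable def Zfun (n : ℕ) (z : Fin n → ℝ) (β : ℝ) : ℝ :=
  ∑ j : Fin n, Real.exp (-(β * gap n z j))

/-- Softmax probabilities `p_{n,j}(β)`. -/
noncomputable def softmaxP (n : ℕ) (z : Fin n → ℝ) (β : ℝ) (j : Fin n) : ℝ :=
  Real.exp (β * z j) / ∑ ℓ : Fin n, Real.exp (β * z ℓ)

/-- Shannon entropy `H_n(β)`. -/
noncomputable def entropyH (n : ℕ) (z : Fin n → ℝ) (β : ℝ) : ℝ :=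
  -∑ j : Fin n, softmaxP n z β j * Real.log (softmaxP n z β j)

/-- The set of values `log N_n(t) / t` over `t > 0`, whose supremum is `Λ_n`. -/
def lamSet (n : ℕ) (z : Fin n → ℝ) : Set ℝ :=
  {r | ∃ t : ℝ, 0 < t ∧ r = Real.log (Ncount n z t) / t}

/-- Second-largest entry of a finite vector (equals the largest in case of ties). -/
noncomputable def secondLargest (n : ℕ) (v : Fin n → ℝ) : ℝ :=
  sInf (Set.range fun i => sSup (v '' {j | j ≠ i}))

/-- Top-two weight gap `D_n(β)`. -/
noncomputable def Dgap (n : ℕ) (z : Fin n → ℝ) (β : ℝ) : ℝ :=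
  sSup (Set.range (softmaxP n z β)) - secondLargest n (softmaxP n z β)

/-- Rank gap `G_n(β) = max_{i,j} |p_{n,i}(β) - p_{n,j}(β)|`. -/
noncomputable def Ggap (n : ℕ) (z : Fin n → ℝ) (β : ℝ) : ℝ :=
  sSup {x | ∃ i j : Fin n, x = |softmaxP n z β i - softmaxP n z β j|}

/-- Resolved accumulation scale `Λ_n^{(r)}` (with `sup ∅ = 0`), valued in `ℝ≥0∞`. -/
noncomputable def resolvedLam (n : ℕ) (z : Fin n → ℝ) (r : ℝ) : ℝ≥0∞ :=
  ⨆ t ∈ {t : ℝ | 0 < t ∧ r < Real.log (Ncount n z t)},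
    ENNReal.ofReal ((Real.log (Ncount n z t) - r) / t)

/-- Laplace envelope `S_n(β) = sup_{t ≥ 0} (log N_n(t) - β t)`. -/
noncomputable def Sfun (n : ℕ) (z : Fin n → ℝ) (β : ℝ) : ℝ :=
  sSup {x | ∃ t : ℝ, 0 ≤ t ∧ x = Real.log (Ncount n z t) - β * t}

/-- Rank boundary `B_n^rank(r) = sup {β ≥ 0 : log Z_n(β) ≥ r}`, valued in `ℝ≥0∞`. -/
noncomputable def rankBoundary (n : ℕ) (z : Fin n → ℝ) (r : ℝ) : ℝ≥0∞ :=
  ⨆ β ∈ {β : ℝ | 0 ≤ β ∧ r ≤ Real.log (Zfun n z β)}, ENNReal.ofReal β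

/-- `X_n ≍ (log n)^ξ`. -/
def IsLogAsymp (X : ℕ → ℝ) (ξ : ℝ) : Prop :=
  ∃ c₁ c₂ : ℝ, 0 < c₁ ∧ c₁ ≤ c₂ ∧
    ∀ᶠ n : ℕ in Filter.atTop,
      c₁ * Real.log n ^ ξ ≤ X n ∧ X n ≤ c₂ * Real.log n ^ ξ


/-! Writing each weight as `exp (-β g) = ∫ t in Ioi g, β * exp (-β * t)` and summing over `j` gives
the Laplace–Stieltjes identity `Z_n(β) = ∫₀^∞ β e^{-βt} N_n(t) dt`. By definition of `Λ_n`,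
`N_n(t) ≤ e^{Λ_n t}` for `t > 0`, so the integral is at most `∫₀^∞ β e^{-(β - Λ_n) t} dt = β / (β - Λ_n)`.
The lower bound is the term of a maximiser, whose gap is `0`. -/

open Real Set

section LaplaceStieltjes

variable {β : ℝ}

lemma integrableOn_mul_exp_neg_mul_Ioi (hβ : 0 < β) (c : ℝ) :
    IntegrableOn (fun t => β * exp (-β * t)) (Ioi c) :=
  (integrableOn_exp_mul_Ioi (neg_neg_of_pos hβ) c).const_mul β

lemma integral_mul_exp_neg_mul_Ioi (hβ : 0 < β) (c : ℝ) :
    ∫ t in Ioi c, β * exp (-β * t) = exp (-β * c) := by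
  rw [integral_const_mul, integral_exp_mul_Ioi (neg_neg_of_pos hβ)]
  field_simp

lemma integral_Ioi_zero_indicator_Ici (hβ : 0 < β) {a : ℝ} (ha : 0 ≤ a) :
    ∫ t in Ioi 0, (Ici a).indicator (fun t => β * exp (-β * t)) t = exp (-β * a) := by
  rw [← integral_Ici_eq_integral_Ioi, setIntegral_indicator measurableSet_Ici, Ici_inter_Ici,
    max_eq_right ha, integral_Ici_eq_integral_Ioi, integral_mul_exp_neg_mul_Ioi hβ]

variable {ι : Type*} [Fintype ι] (g : ι → ℝ)

lemma mul_exp_neg_mul_mul_ncard_eq_sum_indicator (t : ℝ) :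
    β * exp (-β * t) * {j | g j ≤ t}.ncard =
      ∑ j, (Ici (g j)).indicator (fun t => β * exp (-β * t)) t := by
  classical
  simp only [indicator_apply, mem_Ici]
  rw [← Finset.sum_filter, Finset.sum_const, nsmul_eq_mul, mul_comm, ← Set.ncard_coe_finset,
    Finset.coe_filter]
  simp

variable {g}

lemma integrableOn_mul_exp_neg_mul_mul_ncard (hβ : 0 < β) :
    IntegrableOn (fun t => β * exp (-β * t) * {j | g j ≤ t}.ncard) (Ioi 0) := by
  simp_rw [mul_exp_neg_mul_mul_ncard_eq_sum_indicator]
  exact integrable_finsetSum _ fun j _ =>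
    (integrableOn_mul_exp_neg_mul_Ioi hβ 0).indicator measurableSet_Ici

theorem sum_exp_neg_mul_eq_integral_ncard (hβ : 0 < β) (hg : ∀ j, 0 ≤ g j) :
    ∑ j, exp (-(β * g j)) = ∫ t in Ioi 0, β * exp (-β * t) * {j | g j ≤ t}.ncard := by
  simp_rw [mul_exp_neg_mul_mul_ncard_eq_sum_indicator]
  rw [integral_finsetSum _ fun j _ =>
    (integrableOn_mul_exp_neg_mul_Ioi hβ 0).indicator measurableSet_Ici]
  exact Finset.sum_congr rfl fun j _ => by rw [integral_Ioi_zero_indicator_Ici hβ (hg j), neg_mul]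

end LaplaceStieltjes

theorem integral_mul_exp_neg_mul_le_of_le_exp {β Λ : ℝ} {N : ℝ → ℝ} (hβ : 0 ≤ β) (hΛβ : Λ < β)
    (hN : ∀ t > 0, N t ≤ exp (Λ * t))
    (hint : IntegrableOn (fun t => β * exp (-β * t) * N t) (Ioi 0)) :
    ∫ t in Ioi 0, β * exp (-β * t) * N t ≤ β / (β - Λ) := by
  have hneg : Λ - β < 0 := sub_neg.2 hΛβ
  have hmajorant : ∀ t, β * exp (-β * t) * exp (Λ * t) = β * exp ((Λ - β) * t) := fun t => by
    rw [mul_assoc, ← exp_add, ← add_mul, neg_add_eq_sub]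
  calc ∫ t in Ioi 0, β * exp (-β * t) * N t
      ≤ ∫ t in Ioi 0, β * exp (-β * t) * exp (Λ * t) := by
        refine setIntegral_mono_on hint ?_ measurableSet_Ioi fun t ht => ?_
        · simp_rw [hmajorant]
          exact (integrableOn_exp_mul_Ioi hneg 0).const_mul β
        · exact mul_le_mul_of_nonneg_left (hN t ht) (by positivity)
    _ = β / (β - Λ) := by
        simp_rw [hmajorant]
        rw [integral_const_mul, integral_exp_mul_Ioi hneg, mul_zero, exp_zero, ← neg_sub β Λ,
          neg_div_neg_eq, mul_one_div]

lemma natCast_le_exp_of_log_div_le {N : ℕ} {t Λ : ℝ} (ht : 0 < t) (h : log N / t ≤ Λ) :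
    (N : ℝ) ≤ exp (Λ * t) := by
  rcases N.eq_zero_or_pos with rfl | hN
  · simpa using (exp_pos _).le
  rw [← exp_log (Nat.cast_pos.2 hN)]
  exact exp_le_exp.2 ((div_le_iff₀ ht).1 h)

section Gaps

variable {n : ℕ} (z : Fin n → ℝ)

lemma gap_nonneg (j : Fin n) : 0 ≤ gap n z j :=
  sub_nonneg.2 (le_csSup (finite_range z).bddAbove ⟨j, rfl⟩)

lemma exists_gap_eq_zero (hn : 0 < n) : ∃ j, gap n z j = 0 := by
  obtain ⟨j, hj⟩ := Nonempty.csSup_mem ⟨z ⟨0, hn⟩, mem_range_self _⟩ (finite_range z)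
  exact ⟨j, sub_eq_zero.2 hj.symm⟩

lemma one_le_Zfun (hn : 0 < n) (β : ℝ) : 1 ≤ Zfun n z β := by
  obtain ⟨j, hj⟩ := exists_gap_eq_zero z hn
  simpa [Zfun, hj] using Finset.single_le_sum (f := fun j => exp (-(β * gap n z j)))
    (fun i _ => (exp_pos _).le) (Finset.mem_univ j)

variable {z} {Λ : ℝ}

lemma Ncount_le_exp (hΛ : Λ ∈ upperBounds (lamSet n z)) {t : ℝ} (ht : 0 < t) : (Ncount n z t : ℝ) ≤ exp (Λ * t) :=
  natCast_le_exp_of_log_div_le ht (hΛ ⟨t, ht, rfl⟩)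

lemma nonneg_of_mem_upperBounds_lamSet (hΛ : Λ ∈ upperBounds (lamSet n z)) : 0 ≤ Λ := by
  have h : log (Ncount n z 1) / 1 ≤ Λ := hΛ ⟨1, one_pos, rfl⟩
  rw [div_one] at h
  exact (log_natCast_nonneg _).trans h

end Gaps

theorem stmt6 (n : ℕ) (hn : 2 ≤ n) (z : Fin n → ℝ) (Λ β : ℝ)
    (hΛ : IsLUB (lamSet n z) Λ) (hβ : Λ < β) :
    1 ≤ Zfun n z β ∧ Zfun n z β ≤ β / (β - Λ) := by
  have hβ₀ : 0 < β := (nonneg_of_mem_upperBounds_lamSet hΛ.1).trans_lt hβ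
  refine ⟨one_le_Zfun z (by omega) β, ?_⟩
  rw [Zfun, sum_exp_neg_mul_eq_integral_ncard hβ₀ (gap_nonneg z)]
  exact integral_mul_exp_neg_mul_le_of_le_exp hβ₀.le hβ (fun t ht => Ncount_le_exp hΛ.1 ht)
    (integrableOn_mul_exp_neg_mul_mul_ncard hβ₀)
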